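/- Let r ≥ 1 be an integer, let x_1,…,x_r be complex numbers such that x_j ∉ {0,1,−1} for all j and x_j² ≠ x_k² for j ≠ k, and let α, β, γ be complex numbers. Then ∑_{k=1}^r (a(x,k) + b(x,k)) = ∑_{k=1}^r ∑_{J ⊆ {1,…,r}∖{k}} γ^{|J|} · p_{|J|}(x_k) / ((x_k² − 1) · ∏_{j∈J}(x_k² − x_j²)), where the inner sum runs over all subsets J of {1,…,r} not containing k. -/

import Mathlib

/-!
Since `(x + c)² - y² = c (c + 2x) + (x² - y²)`, each factor of the product in `a(x,k)` is
`1 + γ (γ + 2x_k) / (x_k² - x_j²)`, and in `b(x,k)` it is the same with `γ` replaced by `-γ`.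
Expanding both products over subsets `J` of `{1,…,r} ∖ {k}` and adding the two terms belonging
to the same `J` over the common denominator `x_k (x_k² - 1) ∏_{j∈J} (x_k² - x_j²)` gives the
summand `γ^{|J|} p_{|J|}(x_k) / ((x_k² - 1) ∏_{j∈J} (x_k² - x_j²))`.
-/

open Finset

section

variable {ι K : Type*} [Field K]

theorem add_sq_sub_sq_div_sub_sq {u v : K} (h : u ^ 2 ≠ v ^ 2) (c : K) :
    ((u + c) ^ 2 - v ^ 2) / (u ^ 2 - v ^ 2) = c * (c + 2 * u) / (u ^ 2 - v ^ 2) + 1 := by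
  have h' : u ^ 2 - v ^ 2 ≠ 0 := sub_ne_zero.mpr h
  field_simp
  ring

theorem prod_div_add_one {F : Type*} [Semifield F] (s : Finset ι) (t : F) (d : ι → F) :
    ∏ j ∈ s, (t / d j + 1) = ∑ J ∈ s.powerset, t ^ #J / ∏ j ∈ J, d j := by
  simp only [prod_add_one, prod_div_distrib, prod_const]

theorem prod_add_sq_sub_sq_div_sub_sq (s : Finset ι) (u : K) (y : ι → K)
    (hy : ∀ j ∈ s, u ^ 2 ≠ y j ^ 2) (c : K) :
    ∏ j ∈ s, ((u + c) ^ 2 - y j ^ 2) / (u ^ 2 - y j ^ 2)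
      = ∑ J ∈ s.powerset, (c * (c + 2 * u)) ^ #J / ∏ j ∈ J, (u ^ 2 - y j ^ 2) := by
  rw [← prod_div_add_one]
  exact prod_congr rfl fun j hj => add_sq_sub_sq_div_sub_sq (hy j hj) c

theorem sum_ab_summand_eq_sum_powerset (s : Finset ι) (x : K) (y : ι → K)
    (hx1 : x ≠ 1) (hxm1 : x ≠ -1) (hy : ∀ j ∈ s, x ^ 2 ≠ y j ^ 2) (α β γ : K) :
    ((x + α) * (x + β)) / (x * (x + 1)) *
          ∏ j ∈ s, ((x + γ) ^ 2 - y j ^ 2) / (x ^ 2 - y j ^ 2)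
        + ((x - α) * (x - β)) / (x * (x - 1)) *
          ∏ j ∈ s, ((x - γ) ^ 2 - y j ^ 2) / (x ^ 2 - y j ^ 2)
      = ∑ J ∈ s.powerset,
          γ ^ #J *
            ((1 / x) *
              ((x + α) * (x + β) * (x - 1) * (γ + 2 * x) ^ #J
                + (x - α) * (x - β) * (x + 1) * (γ - 2 * x) ^ #J)) /
            ((x ^ 2 - 1) * ∏ j ∈ J, (x ^ 2 - y j ^ 2)) := by
  have hx1' : x - 1 ≠ 0 := sub_ne_zero.mpr hx1
  have hxm1' : x + 1 ≠ 0 := by rwa [← sub_neg_eq_add, sub_ne_zero]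
  rw [prod_add_sq_sub_sq_div_sub_sq s x y hy, sub_eq_add_neg x γ,
    prod_add_sq_sub_sq_div_sub_sq s x y hy, mul_sum, mul_sum, ← sum_add_distrib]
  refine sum_congr rfl fun J _ => ?_
  rw [show -γ * (-γ + 2 * x) = γ * (γ - 2 * x) by ring, mul_pow, mul_pow]
  rcases eq_or_ne x 0 with rfl | hx0
  · -- both sides vanish, by the conventions `0 / 0 = 0` and `1 / 0 = 0`
    simp
  · rw [show x ^ 2 - 1 = (x - 1) * (x + 1) by ring]
    field_simp

end

theorem sum_ab_as_subset_sum (r : ℕ) (x : Fin r → ℂ)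
    (hx1 : ∀ j, x j ≠ 1) (hxm1 : ∀ j, x j ≠ -1)
    (hxx : ∀ j k : Fin r, j ≠ k → (x j) ^ 2 ≠ (x k) ^ 2)
    (α β γ : ℂ) :
    (∑ k : Fin r,
      (((x k + α) * (x k + β)) / (x k * (x k + 1)) *
          ∏ j ∈ univ.erase k, ((x k + γ) ^ 2 - (x j) ^ 2) / ((x k) ^ 2 - (x j) ^ 2)
        + ((x k - α) * (x k - β)) / (x k * (x k - 1)) *
          ∏ j ∈ univ.erase k, ((x k - γ) ^ 2 - (x j) ^ 2) / ((x k) ^ 2 - (x j) ^ 2)))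
      = ∑ k : Fin r, ∑ J ∈ (univ.erase k).powerset,
          γ ^ J.card *
            ((1 / x k) *
              ((x k + α) * (x k + β) * (x k - 1) * (γ + 2 * x k) ^ J.card
                + (x k - α) * (x k - β) * (x k + 1) * (γ - 2 * x k) ^ J.card)) /
            (((x k) ^ 2 - 1) * ∏ j ∈ J, ((x k) ^ 2 - (x j) ^ 2)) :=
  sum_congr rfl fun k _ =>
    sum_ab_summand_eq_sum_powerset _ (x k) x (hx1 k) (hxm1 k)
      (fun j hj => hxx k j (ne_of_mem_erase hj).symm) α β γ
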